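/- arXiv:1311.3460 — 2 statements merged into one kernel-verified Lean document; each statement's English description precedes it below -/
import Mathlib

section
/- Let u, v, v' be words over Fin n all of whose letters are ≥ 2. If u ++ [1] ++ v ++ [0] ++ v' is canonical, and c is canonical with c ~ v ++ v', then u ++ [1] ++ c is canonical. -/
/-!
Read a word from right to left and let each letter `a` reset the weight of `a` to one more than
the total weight of the letters above `a`; the resulting `weight w : Fin n → ℕ` is preserved by
the Kiselman relations. If no letter above `a` precedes the first occurrence of `a`, the weights
above `a` do not change after it, so the weight of `a` ends up exactly one more than the weight
above it. If some larger letter does precede it and every infix `[b] ++ q ++ [b]` has a letter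
above `b` in `q`, that larger letter's weight strictly grows afterwards, so the weight of `a`
falls short. Hence on such words, whether `a` is visible from the left (no larger letter before
its first occurrence) is a Kiselman invariant.

An infix `[a] ++ q ++ [a]` of `u ++ [1] ++ c` not covered by the hypotheses straddles the `1`,
which is a smaller letter in `q`. If `q` had no larger letter, `a` would be visible from the
left in `c`, hence in `v ++ v'` and in `v ++ [0] ++ v'`, which yields a non-special infix of
the canonical word `u ++ [1] ++ v ++ [0] ++ v'`.
-/

variable {n : ℕ}

/-- Generating relation of the Kiselman congruence on words over `Fin n`. -/
inductive KisStep : List (Fin n) → List (Fin n) → Prop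
  | idem : ∀ (u v : List (Fin n)) (i : Fin n),
      KisStep (u ++ [i, i] ++ v) (u ++ [i] ++ v)
  | left : ∀ (u v : List (Fin n)) (i j : Fin n), i < j →
      KisStep (u ++ [i, j, i] ++ v) (u ++ [i, j] ++ v)
  | right : ∀ (u v : List (Fin n)) (i j : Fin n), i < j →
      KisStep (u ++ [j, i, j] ++ v) (u ++ [i, j] ++ v)

/-- The Kiselman congruence: smallest equivalence relation containing `KisStep`. -/
def KisEquiv (x y : List (Fin n)) : Prop := Relation.EqvGen KisStep x y

/-- An infix `[i] ++ u ++ [i]` is special if `u` contains a letter `> i` and a letter `< i`. -/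
def Special (i : Fin n) (u : List (Fin n)) : Prop :=
  (∃ j ∈ u, i < j) ∧ (∃ j ∈ u, j < i)

/-- A word is canonical if all its infixes of the form `[i] ++ u ++ [i]` are special. -/
def Canonical (w : List (Fin n)) : Prop :=
  ∀ (i : Fin n) (u : List (Fin n)), ([i] ++ u ++ [i]) <:+: w → Special i u

/-- Delete all letters strictly smaller than `k`. -/
def filterGE (k : Fin n) (w : List (Fin n)) : List (Fin n) :=
  w.filter (fun a => decide (k ≤ a))

/-- `trunc i w` is the longest suffix of `w` with head `i`, or `[]` if `i ∉ w`. -/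
def trunc (i : Fin n) : List (Fin n) → List (Fin n)
  | [] => []
  | a :: t => if a = i then a :: t else trunc i t

/-- Longest suffix of `w` whose head is `< k` (as a natural number), or `[]`. -/
def truncLtN (k : ℕ) : List (Fin n) → List (Fin n)
  | [] => []
  | a :: t => if (a : ℕ) < k then a :: t else truncLtN k t

/-- `join u v = u⁺ ++ v`, where `u⁻` is the longest suffix of `u` that is a sublist of `v`. -/
def join : List (Fin n) → List (Fin n) → List (Fin n)
  | [], v => v
  | a :: t, v => if (a :: t).Sublist v then v else a :: join t v

/-- The local update function at vertex `i` of the update system `S_n^⋆`. -/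
def Fstep (i : Fin n) (s : Fin n → List (Fin n)) : Fin n → List (Fin n) :=
  Function.update s i
    (i :: List.foldr join []
      ((((List.finRange n).filter (fun j => decide (i < j))).reverse).map s))

/-- The evolution induced by a word (rightmost letter acts first). -/
def Fword (w : List (Fin n)) (s : Fin n → List (Fin n)) : Fin n → List (Fin n) :=
  w.foldr Fstep s

/-- The initial system state `⋆`. -/
def starState : Fin n → List (Fin n) := fun _ => []

namespace Kiselman

section Words

variable {α : Type*}

theorem pair_infix_append {a : α} {q x y : List α} (h : [a] ++ q ++ [a] <:+: x ++ y) :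
    [a] ++ q ++ [a] <:+: x ∨ [a] ++ q ++ [a] <:+: y ∨
      ∃ p q₁ q₂ t, q = q₁ ++ q₂ ∧ x = p ++ a :: q₁ ∧ y = q₂ ++ a :: t := by
  obtain ⟨s, t, hst⟩ := h
  rcases List.append_eq_append_iff.1 hst with ⟨m, rfl, -⟩ | ⟨m, hsm, rfl⟩
  · exact .inl ⟨s, m, rfl⟩
  have hsm : s ++ a :: (q ++ [a]) = x ++ m := by simpa using hsm
  rcases List.append_eq_append_iff.1 hsm with ⟨l, rfl, hl⟩ | ⟨l, rfl, rfl⟩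
  · rcases List.cons_eq_append_iff.1 hl with ⟨rfl, rfl⟩ | ⟨l', rfl, hqm⟩
    · exact .inr (.inl ⟨[], t, by simp⟩)
    rcases List.eq_nil_or_concat m with rfl | ⟨m', b, rfl⟩
    · exact .inl ⟨s, [], by simpa using hqm⟩
    have hqm : q ++ [a] = (l' ++ m') ++ [b] := by simpa using hqm
    obtain ⟨rfl, hb⟩ := List.append_inj' hqm rfl
    obtain rfl : a = b := by simpa using hb
    exact .inr (.inr ⟨s, l', m', t, rfl, rfl, by simp⟩)
  · exact .inr (.inl ⟨l, t, by simp⟩)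

theorem mem_of_append_singleton_eq_append_cons {x p q : List α} {a o : α}
    (h : x ++ [o] = p ++ a :: q) (hoa : o ≠ a) : o ∈ q := by
  rcases List.eq_nil_or_concat q with rfl | ⟨q', l, rfl⟩
  · exact absurd (List.append_inj' h rfl).2 (by simpa using hoa)
  · have h : x ++ [o] = (p ++ a :: q') ++ [l] := by simpa using h
    obtain ⟨-, hl⟩ := List.append_inj' h rfl
    simp_all

variable [LT α]

def UpperCanonical (w : List α) : Prop :=
  ∀ a q, [a] ++ q ++ [a] <:+: w → ∃ b ∈ q, a < b

theorem UpperCanonical.of_infix {w w' : List α} (h : UpperCanonical w) (hw : w' <:+: w) :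
    UpperCanonical w' :=
  fun a q hq => h a q (hq.trans hw)

def VisibleFromLeft (a : α) (w : List α) : Prop :=
  ∃ P T, w = P ++ a :: T ∧ ∀ b ∈ P, ¬ a < b

theorem VisibleFromLeft.insert {a z : α} {x y : List α} (h : VisibleFromLeft a (x ++ y))
    (hz : ¬ a < z) : VisibleFromLeft a (x ++ z :: y) := by
  obtain ⟨P, T, hxy, hP⟩ := h
  rcases List.append_eq_append_iff.1 hxy with ⟨m, rfl, rfl⟩ | ⟨m, rfl, hm⟩
  · refine ⟨x ++ z :: m, T, by simp, ?_⟩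
    simp only [List.mem_append, List.mem_cons] at hP ⊢
    rintro b (hb | rfl | hb)
    exacts [hP b (.inl hb), hz, hP b (.inr hb)]
  · rcases List.cons_eq_append_iff.1 hm with ⟨rfl, rfl⟩ | ⟨m', rfl, rfl⟩
    · refine ⟨P ++ [z], T, by simp, ?_⟩
      simpa [or_imp, forall_and] using ⟨hP, hz⟩
    · exact ⟨P, m' ++ z :: y, by simp, hP⟩

end Words

theorem UpperCanonical.of_insert_bot {α : Type*} [Preorder α] {x y : List α} {z : α}
    (h : UpperCanonical (x ++ z :: y)) (hz : IsBot z) : UpperCanonical (x ++ y) := by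
  intro a q hq
  rcases pair_infix_append hq with hq | hq | ⟨p, q₁, q₂, t, rfl, rfl, rfl⟩
  · exact h a q (hq.trans (List.prefix_append x (z :: y)).isInfix)
  · exact h a q (hq.trans ⟨x ++ [z], [], by simp⟩)
  · obtain ⟨b, hb, hab⟩ := h a (q₁ ++ z :: q₂) ⟨p, t, by simp⟩
    rcases List.mem_append.1 hb with hb | hb
    · exact ⟨b, List.mem_append_left _ hb, hab⟩
    rcases List.mem_cons.1 hb with rfl | hb
    · exact absurd hab (hz a).not_gt
    · exact ⟨b, List.mem_append_right _ hb, hab⟩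

theorem _root_.Canonical.upperCanonical {w : List (Fin n)} (h : Canonical w) : UpperCanonical w :=
  fun a q hq => (h a q hq).1

def upperSum (a : Fin n) (s : Fin n → ℕ) : ℕ := ∑ k with a < k, s k

def bump (a : Fin n) (s : Fin n → ℕ) : Fin n → ℕ := Function.update s a (1 + upperSum a s)

def weight (w : List (Fin n)) : Fin n → ℕ := w.foldr bump 0

section Bump

variable {a b : Fin n} {s t : Fin n → ℕ}

theorem upperSum_mono (h : s ≤ t) : upperSum a s ≤ upperSum a t :=
  Finset.sum_le_sum fun k _ => h k

theorem upperSum_lt_upperSum (h : s ≤ t) (hab : a < b) (hb : s b < t b) :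
    upperSum a s < upperSum a t :=
  Finset.sum_lt_sum (fun k _ => h k) ⟨b, by simpa using hab, hb⟩

@[simp] theorem bump_self : bump a s a = 1 + upperSum a s := Function.update_self _ _ _

theorem bump_of_ne {k : Fin n} (h : k ≠ a) : bump a s k = s k := Function.update_of_ne h _ _

theorem upperSum_bump_of_not_lt (h : ¬ a < b) : upperSum a (bump b s) = upperSum a s :=
  Finset.sum_congr rfl fun _ hk =>
    bump_of_ne fun hkb => h (hkb ▸ (Finset.mem_filter.1 hk).2)

theorem le_bump (h : s a ≤ 1 + upperSum a s) : s ≤ bump a s := by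
  intro k
  rcases eq_or_ne k a with rfl | hk
  · simpa using h
  · rw [bump_of_ne hk]

theorem bump_bump_self : bump a (bump a s) = bump a s := by
  funext k
  rcases eq_or_ne k a with rfl | hk
  · simp [upperSum_bump_of_not_lt (lt_irrefl k)]
  · simp [bump_of_ne hk]

theorem bump_bump_bump_of_lt (hab : a < b) :
    bump a (bump b (bump a s)) = bump a (bump b s) := by
  have hb : bump b (bump a s) b = bump b s b := by
    simp [upperSum_bump_of_not_lt hab.not_gt]
  have hsum : upperSum a (bump b (bump a s)) = upperSum a (bump b s) := by
    refine Finset.sum_congr rfl fun k hk => ?_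
    rcases eq_or_ne k b with rfl | hkb
    · exact hb
    · rw [bump_of_ne hkb, bump_of_ne hkb, bump_of_ne (Finset.mem_filter.1 hk).2.ne']
  funext k
  rcases eq_or_ne k a with rfl | hka
  · simp [hsum]
  rcases eq_or_ne k b with rfl | hkb
  · rw [bump_of_ne hka, bump_of_ne hka, hb]
  · simp [bump_of_ne hka, bump_of_ne hkb]

theorem bump_bump_bump_of_gt (hab : a < b) :
    bump b (bump a (bump b s)) = bump a (bump b s) := by
  funext k
  rcases eq_or_ne k b with rfl | hkb
  · rw [bump_self, upperSum_bump_of_not_lt hab.not_gt, upperSum_bump_of_not_lt (lt_irrefl k),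
      bump_of_ne hab.ne', bump_self]
  · rw [bump_of_ne hkb]

end Bump

theorem weight_cons (a : Fin n) (w : List (Fin n)) : weight (a :: w) = bump a (weight w) := rfl

theorem weight_append (x y : List (Fin n)) : weight (x ++ y) = x.foldr bump (weight y) :=
  List.foldr_append

theorem _root_.KisStep.weight_eq {x y : List (Fin n)} (h : KisStep x y) : weight x = weight y := by
  cases h with
  | idem u v i => simp [weight_append, weight_cons, bump_bump_self]
  | left u v i j hij => simp [weight_append, weight_cons, bump_bump_bump_of_lt hij]
  | right u v i j hij => simp [weight_append, weight_cons, bump_bump_bump_of_gt hij]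

theorem _root_.KisEquiv.weight_eq {x y : List (Fin n)} (h : KisEquiv x y) :
    weight x = weight y := by
  induction h with
  | rel _ _ h => exact h.weight_eq
  | refl => rfl
  | symm _ _ _ ih => exact ih.symm
  | trans _ _ _ _ _ ih₁ ih₂ => exact ih₁.trans ih₂

theorem _root_.KisEquiv.mem_iff {x y : List (Fin n)} (h : KisEquiv x y) {a : Fin n} :
    a ∈ x ↔ a ∈ y := by
  induction h with
  | rel _ _ h => cases h <;> simp [or_left_comm]
  | refl => rfl
  | symm _ _ _ ih => exact ih.symm
  | trans _ _ _ _ _ ih₁ ih₂ => exact ih₁.trans ih₂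

theorem weight_le_one_add_upperSum (w : List (Fin n)) (a : Fin n) :
    weight w a ≤ 1 + upperSum a (weight w) := by
  induction w generalizing a with
  | nil => simp [weight]
  | cons b w ih =>
    rw [weight_cons]
    rcases eq_or_ne a b with rfl | hab
    · simp [upperSum_bump_of_not_lt (lt_irrefl a)]
    · rw [bump_of_ne hab]
      exact (ih a).trans (by gcongr; exact upperSum_mono (le_bump (ih b)))

theorem weight_le_weight_of_suffix {y w : List (Fin n)} (h : y <:+ w) : weight y ≤ weight w := by
  obtain ⟨x, rfl⟩ := h
  induction x with
  | nil => exact le_rfl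
  | cons b x ih => exact ih.trans (le_bump (weight_le_one_add_upperSum _ b))

theorem weight_append_apply_of_not_mem {a : Fin n} {x : List (Fin n)} (h : a ∉ x)
    (y : List (Fin n)) : weight (x ++ y) a = weight y a := by
  induction x with
  | nil => rfl
  | cons b x ih =>
    rw [List.cons_append, weight_cons, bump_of_ne (List.ne_of_not_mem_cons h),
      ih (List.not_mem_of_not_mem_cons h)]

theorem weight_eq_zero_of_not_mem {a : Fin n} {w : List (Fin n)} (h : a ∉ w) :
    weight w a = 0 := by
  simpa [weight] using weight_append_apply_of_not_mem h []

theorem weight_append_cons_self {a : Fin n} {P : List (Fin n)} (h : a ∉ P) (T : List (Fin n)) :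
    weight (P ++ a :: T) a = 1 + upperSum a (weight T) := by
  rw [weight_append_apply_of_not_mem h, weight_cons, bump_self]

theorem weight_apply_lt_of_lt {P T : List (Fin n)} {a b : Fin n} (haP : a ∉ P) (hab : a < b)
    (hb : weight T b < weight (P ++ a :: T) b) :
    weight (P ++ a :: T) a < 1 + upperSum a (weight (P ++ a :: T)) := by
  rw [weight_append_cons_self haP]
  exact Nat.add_lt_add_left
    (upperSum_lt_upperSum (weight_le_weight_of_suffix ⟨P ++ [a], by simp⟩) hab hb) 1

theorem weight_lt_weight_of_mem {x y : List (Fin n)} (hw : UpperCanonical (x ++ y)) {b : Fin n}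
    (hb : b ∈ x) : weight y b < weight (x ++ y) b := by
  obtain ⟨P, x', rfl, hbP⟩ := List.eq_append_cons_of_mem hb
  have hT : weight (x' ++ y) b < 1 + upperSum b (weight (x' ++ y)) := by
    by_cases hbT : b ∈ x' ++ y
    · obtain ⟨Q, R, hQR, hbQ⟩ := List.eq_append_cons_of_mem hbT
      obtain ⟨c, hcQ, hbc⟩ := hw b Q ⟨P, R, by simp [← hQR]⟩
      have hRc := weight_lt_weight_of_mem (x := Q ++ [b]) (y := R) (b := c)
        (hw.of_infix ⟨P ++ [b], [], by simp [← hQR]⟩) (by simp [hcQ])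
      rw [hQR]
      exact weight_apply_lt_of_lt hbQ hbc (by simpa using hRc)
    · simp [weight_eq_zero_of_not_mem hbT]
  calc weight y b ≤ weight (x' ++ y) b := weight_le_weight_of_suffix (List.suffix_append x' y) b
    _ < 1 + upperSum b (weight (x' ++ y)) := hT
    _ = weight (P ++ b :: x' ++ y) b := by simp [weight_append_cons_self hbP]
termination_by (x ++ y).length
decreasing_by simp_all; omega

theorem VisibleFromLeft.weight_eq {a : Fin n} {w : List (Fin n)} (h : VisibleFromLeft a w) :
    weight w a = 1 + upperSum a (weight w) := by
  obtain ⟨P, T, rfl, hP⟩ := h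
  induction P with
  | nil => simp [weight_cons, upperSum_bump_of_not_lt (lt_irrefl a)]
  | cons b P ih =>
    rw [List.cons_append, weight_cons, upperSum_bump_of_not_lt (hP b List.mem_cons_self)]
    rcases eq_or_ne a b with rfl | hab
    · exact bump_self
    · rw [bump_of_ne hab]
      exact ih fun c hc => hP c (List.mem_cons_of_mem b hc)

theorem VisibleFromLeft.of_kisEquiv {a : Fin n} {c d : List (Fin n)} (h : VisibleFromLeft a c)
    (hcd : KisEquiv c d) (hd : UpperCanonical d) : VisibleFromLeft a d := by
  have had : a ∈ d := by
    obtain ⟨P, T, rfl, -⟩ := h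
    exact hcd.mem_iff.1 (by simp)
  obtain ⟨P, T, rfl, haP⟩ := List.eq_append_cons_of_mem had
  refine ⟨P, T, rfl, fun b hbP hab => (lt_irrefl (weight c a) ?_)⟩
  have hb : weight T b < weight (P ++ a :: T) b := by
    simpa using weight_lt_weight_of_mem (x := P ++ [a]) (b := b) (by simpa using hd) (by simp [hbP])
  have hlt := weight_apply_lt_of_lt haP hab hb
  rwa [← hcd.weight_eq, ← h.weight_eq] at hlt

end Kiselman

open Kiselman

theorem stmt_10_general {n : ℕ} (u v v' c : List (Fin n)) (z o : Fin n)
    (hz : (z : ℕ) = 0) (ho : (o : ℕ) = 1)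
    (hv : ∀ a ∈ v, 2 ≤ (a : ℕ)) (hv' : ∀ a ∈ v', 2 ≤ (a : ℕ))
    (hcan : Canonical (u ++ [o] ++ v ++ [z] ++ v'))
    (hc : Canonical c) (hcv : KisEquiv c (v ++ v')) :
    Canonical (u ++ [o] ++ c) := by
  have hvv : UpperCanonical (v ++ v') :=
    (hcan.upperCanonical.of_infix ⟨u ++ [o], [], by simp⟩).of_insert_bot
      fun b => Fin.le_def.2 (hz ▸ Nat.zero_le b)
  intro a q hq
  rcases pair_infix_append hq with hq | hq | ⟨p, q₁, q₂, t, rfl, hp, rfl⟩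
  · exact hcan a q (hq.trans (by simpa using List.infix_append [] (u ++ [o]) (v ++ z :: v')))
  · exact hc a q hq
  have ha : 2 ≤ (a : ℕ) := by
    rcases List.mem_append.1 (hcv.mem_iff.1 (by simp : a ∈ q₂ ++ a :: t)) with h | h
    exacts [hv a h, hv' a h]
  have hoa : o < a := Fin.lt_def.2 (by omega)
  refine ⟨?_, o, List.mem_append_left _ (mem_of_append_singleton_eq_append_cons hp hoa.ne), hoa⟩
  by_contra! hle
  obtain ⟨P, T, hPT, hP⟩ : VisibleFromLeft a (v ++ z :: v') :=
    (VisibleFromLeft.of_kisEquiv ⟨q₂, t, rfl, fun b hb => (hle b (by simp [hb])).not_gt⟩ hcv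
      hvv).insert (by simp [Fin.lt_def, hz])
  obtain ⟨b, hb, hab⟩ := (hcan a (q₁ ++ P) ⟨p, T, by simp [hp, hPT]⟩).1
  rcases List.mem_append.1 hb with hb | hb
  exacts [(hle b (List.mem_append_left _ hb)).not_gt hab, hP b hb hab]

/-- If `u ++ [1] ++ v ++ [0] ++ v'` is canonical with `u, v, v'` having all letters
`≥ 2`, then `u ++ [1] ++ Can (v ++ v')` is canonical. -/
theorem stmt_10 {n : ℕ} (u v v' c : List (Fin n)) (z o : Fin n)
    (hz : (z : ℕ) = 0) (ho : (o : ℕ) = 1)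
    (hu : ∀ a ∈ u, 2 ≤ (a : ℕ)) (hv : ∀ a ∈ v, 2 ≤ (a : ℕ)) (hv' : ∀ a ∈ v', 2 ≤ (a : ℕ))
    (hcan : Canonical (u ++ [o] ++ v ++ [z] ++ v'))
    (hc : Canonical c) (hcv : KisEquiv c (v ++ v')) :
    Canonical (u ++ [o] ++ c) :=
  stmt_10_general u v v' c z o hz ho hv hv' hcan hc hcv
end

section
/- Let u, u', v, v' be words over Fin n all of whose letters are ≥ 2. Suppose u ++ [1] ++ u' ++ [0] ++ v ++ [1] ++ v' is canonical. If c is canonical with c ~ v ++ v', and d is canonical with d ~ u' ++ v ++ v', then both u ++ [1] ++ u' ++ [0] ++ c and u ++ [1] ++ d are canonical. -/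
/-!
Both words have the form `P ++ [x] ++ C`, where `P ++ [x] ++ S` is canonical and `C` is canonical
and Kiselman-equivalent to the letters of `S` above some `k ≥ x`. An infix `[i] ++ m ++ [i]` on one
side of the junction is special by hypothesis. Across the junction `x < i` lies in `m`; if no
letter `> i` did, deleting all letters `< i` would produce a word `i :: w` Kiselman-equivalent to
`w` in which any two occurrences of a letter are separated by a larger letter. That is impossible:
letting `a` reset coordinate `a` of a function `Fin n → ℕ` to one plus the sum of the coordinates
above `a` respects the Kiselman relations, and on such a word the leading letter strictly
increases its coordinate.
-/

variable {n : ℕ}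

namespace KisEquiv

theorem of_step {x y : List (Fin n)} (h : KisStep x y) : KisEquiv x y :=
  Relation.EqvGen.rel _ _ h

theorem refl (x : List (Fin n)) : KisEquiv x x := Relation.EqvGen.refl x

theorem symm {x y : List (Fin n)} (h : KisEquiv x y) : KisEquiv y x :=
  Relation.EqvGen.symm _ _ h

theorem trans {x y z : List (Fin n)} (h₁ : KisEquiv x y) (h₂ : KisEquiv y z) :
    KisEquiv x z :=
  Relation.EqvGen.trans _ _ _ h₁ h₂

theorem idem (i : Fin n) : KisEquiv [i, i] [i] := of_step (KisStep.idem [] [] i)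

theorem left {i j : Fin n} (h : i < j) : KisEquiv [i, j, i] [i, j] :=
  of_step (KisStep.left [] [] i j h)

theorem right {i j : Fin n} (h : i < j) : KisEquiv [j, i, j] [i, j] :=
  of_step (KisStep.right [] [] i j h)

theorem append_append (u v : List (Fin n)) {x y : List (Fin n)} (h : KisEquiv x y) :
    KisEquiv (u ++ x ++ v) (u ++ y ++ v) := by
  induction h with
  | rel x y hxy =>
    refine of_step ?_
    cases hxy with
    | idem a b i => simpa using KisStep.idem (u ++ a) (b ++ v) i
    | left a b i j hij => simpa using KisStep.left (u ++ a) (b ++ v) i j hij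
    | right a b i j hij => simpa using KisStep.right (u ++ a) (b ++ v) i j hij
  | refl x => exact refl _
  | symm x y _ ih => exact ih.symm
  | trans x y z _ _ ih₁ ih₂ => exact ih₁.trans ih₂

theorem cons (a : Fin n) {x y : List (Fin n)} (h : KisEquiv x y) :
    KisEquiv (a :: x) (a :: y) := by
  simpa using append_append [a] [] h

theorem mem_iff_s11 {x y : List (Fin n)} (h : KisEquiv x y) (a : Fin n) : a ∈ x ↔ a ∈ y := by
  induction h with
  | rel x y hxy => cases hxy <;> simp [or_left_comm]
  | refl x => rfl
  | symm x y _ ih => exact ih.symm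
  | trans x y z _ _ ih₁ ih₂ => exact ih₁.trans ih₂

theorem filter (p : Fin n → Bool) {x y : List (Fin n)} (h : KisEquiv x y) :
    KisEquiv (x.filter p) (y.filter p) := by
  induction h with
  | rel x y hxy =>
    cases hxy with
    | idem u v i =>
      simp only [List.filter_append]
      refine append_append _ _ ?_
      by_cases hi : p i <;> simp [hi, idem, refl]
    | left u v i j hij =>
      simp only [List.filter_append]
      refine append_append _ _ ?_
      by_cases hi : p i <;> by_cases hj : p j <;> simp [hi, hj, idem, left hij, refl]
    | right u v i j hij =>
      simp only [List.filter_append]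
      refine append_append _ _ ?_
      by_cases hi : p i <;> by_cases hj : p j <;> simp [hi, hj, idem, right hij, refl]
  | refl x => exact refl _
  | symm x y _ ih => exact ih.symm
  | trans x y z _ _ ih₁ ih₂ => exact ih₁.trans ih₂

end KisEquiv

@[simp] theorem filterGE_append (k : Fin n) (x y : List (Fin n)) :
    filterGE k (x ++ y) = filterGE k x ++ filterGE k y :=
  List.filter_append ..

@[simp] theorem filterGE_cons_self (k : Fin n) (w : List (Fin n)) :
    filterGE k (k :: w) = k :: filterGE k w := by
  simp [filterGE]

def UpperSpecial (w : List (Fin n)) : Prop :=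
  ∀ (i : Fin n) (u : List (Fin n)), ([i] ++ u ++ [i]) <:+: w → ∃ j ∈ u, i < j

theorem UpperSpecial.infix {w x : List (Fin n)} (hw : UpperSpecial w) (hx : x <:+: w) :
    UpperSpecial x := fun i u hu => hw i u (hu.trans hx)

theorem List.mem_of_cons_suffix_append_singleton {α : Type*} {i x : α} {m P : List α}
    (h : i :: m <:+ P ++ [x]) (hne : i ≠ x) : x ∈ m := by
  rcases List.eq_nil_or_concat' m with rfl | ⟨m', b, rfl⟩
  · exact absurd (List.singleton_suffix_append_singleton_iff.mp h) hne
  · have hb : [b] <:+ P ++ [x] := (List.suffix_append (i :: m') [b]).trans h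
    simp [List.singleton_suffix_append_singleton_iff.mp hb]

theorem List.exists_of_cons_append_singleton_eq_append {α : Type*} {i : α} {m l₁ l₂ : List α}
    (h : i :: (m ++ [i]) = l₁ ++ l₂) (h₁ : l₁ ≠ []) (h₂ : l₂ ≠ []) :
    ∃ m₁ m₂, m = m₁ ++ m₂ ∧ l₁ = i :: m₁ ∧ l₂ = m₂ ++ [i] := by
  obtain ⟨m₁, rfl⟩ : ∃ m₁, l₁ = i :: m₁ := by
    rcases List.cons_eq_append_iff.mp h with ⟨rfl, -⟩ | ⟨m₁, rfl, -⟩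
    exacts [absurd rfl h₁, ⟨m₁, rfl⟩]
  obtain ⟨m₂, c, rfl⟩ := (List.eq_nil_or_concat' l₂).resolve_left h₂
  have h' : m ++ [i] = (m₁ ++ m₂) ++ [c] := by simpa using h
  obtain ⟨rfl, hc⟩ := List.append_inj' h' rfl
  exact ⟨m₁, m₂, rfl, rfl, by simpa using hc.symm⟩

theorem Canonical.infix {w x : List (Fin n)} (hw : Canonical w) (hx : x <:+: w) : Canonical x :=
  fun i u hu => hw i u (hu.trans hx)

theorem Canonical.upperSpecial {w : List (Fin n)} (hw : Canonical w) : UpperSpecial w :=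
  fun i u hu => (hw i u hu).1

theorem Canonical.append {A C : List (Fin n)} (hA : Canonical A) (hC : Canonical C)
    (h : ∀ i m₁ m₂, [i] ++ m₁ <:+ A → m₂ ++ [i] <+: C → Special i (m₁ ++ m₂)) :
    Canonical (A ++ C) := by
  intro i m hm
  rcases List.infix_append_iff_ne_nil.mp hm with hm | hm | ⟨l₁, l₂, h₁, h₂, hl, hA', hC'⟩
  · exact hA i m hm
  · exact hC i m hm
  · obtain ⟨m₁, m₂, rfl, rfl, rfl⟩ :=
      List.exists_of_cons_append_singleton_eq_append (by simpa using hl) h₁ h₂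
    exact h i m₁ m₂ hA' hC'

theorem UpperSpecial.filterGE {w : List (Fin n)} (hw : UpperSpecial w) (k : Fin n) :
    UpperSpecial (filterGE k w) := by
  rintro i u ⟨L, R, h⟩
  replace h : w.filter (k ≤ ·) = L ++ i :: (u ++ i :: R) := by rw [← _root_.filterGE, ← h]; simp
  obtain ⟨w₁, w₂, rfl, -, h₂⟩ := List.filter_eq_append_iff.mp h
  obtain ⟨l₁, l₂, rfl, -, hki, h₃⟩ := List.filter_eq_cons_iff.mp h₂
  obtain ⟨m, r, rfl, rfl, h₄⟩ := List.filter_eq_append_iff.mp h₃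
  obtain ⟨l₃, l₄, rfl, hl₃, -, -⟩ := List.filter_eq_cons_iff.mp h₄
  obtain ⟨j, hj, hij⟩ := hw i (m ++ l₃) ⟨w₁ ++ l₁, l₄, by simp⟩
  have hkj : k ≤ j := (of_decide_eq_true hki).trans hij.le
  rcases List.mem_append.mp hj with hj | hj
  · exact ⟨j, List.mem_filter.mpr ⟨hj, decide_eq_true hkj⟩, hij⟩
  · exact absurd (decide_eq_true hkj) (hl₃ j hj)

namespace Kiselman

open Finset

def sumAbove (a : Fin n) (s : Fin n → ℕ) : ℕ := ∑ k ∈ Ioi a, s k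

def act (a : Fin n) (s : Fin n → ℕ) : Fin n → ℕ := Function.update s a (sumAbove a s + 1)

def actWord (w : List (Fin n)) (s : Fin n → ℕ) : Fin n → ℕ := w.foldr act s

@[simp] theorem actWord_cons (a : Fin n) (w : List (Fin n)) (s : Fin n → ℕ) :
    actWord (a :: w) s = act a (actWord w s) := rfl

@[simp] theorem actWord_append (x y : List (Fin n)) (s : Fin n → ℕ) :
    actWord (x ++ y) s = actWord x (actWord y s) :=
  List.foldr_append

theorem sumAbove_congr {a : Fin n} {s t : Fin n → ℕ} (h : ∀ k, a < k → s k = t k) :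
    sumAbove a s = sumAbove a t :=
  sum_congr rfl fun k hk => h k (mem_Ioi.mp hk)

theorem sumAbove_update_of_not_lt {a b : Fin n} (h : ¬ a < b) (s : Fin n → ℕ) (m : ℕ) :
    sumAbove a (Function.update s b m) = sumAbove a s :=
  sumAbove_congr fun k hk => Function.update_of_ne (by rintro rfl; exact h hk) _ _

theorem sumAbove_mono {a : Fin n} {s t : Fin n → ℕ} (h : s ≤ t) : sumAbove a s ≤ sumAbove a t :=
  sum_le_sum fun k _ => h k

theorem sumAbove_lt {a b : Fin n} {s t : Fin n → ℕ} (h : s ≤ t) (hab : a < b) (hb : s b < t b) :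
    sumAbove a s < sumAbove a t :=
  sum_lt_sum (fun k _ => h k) ⟨b, mem_Ioi.mpr hab, hb⟩

@[simp] theorem act_self (a : Fin n) (s : Fin n → ℕ) : act a s a = sumAbove a s + 1 :=
  Function.update_self ..

theorem act_of_ne {a b : Fin n} (h : b ≠ a) (s : Fin n → ℕ) : act a s b = s b :=
  Function.update_of_ne h ..

theorem sumAbove_act_of_not_lt {a b : Fin n} (h : ¬ a < b) (s : Fin n → ℕ) :
    sumAbove a (act b s) = sumAbove a s :=
  sumAbove_update_of_not_lt h ..

theorem sumAbove_act_self (a : Fin n) (s : Fin n → ℕ) : sumAbove a (act a s) = sumAbove a s :=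
  sumAbove_act_of_not_lt (lt_irrefl a) s

theorem act_act (a : Fin n) (s : Fin n → ℕ) : act a (act a s) = act a s := by
  rw [act, sumAbove_act_self]
  exact Function.update_idem ..

theorem act_act_act_of_lt {a b : Fin n} (hab : a < b) (s : Fin n → ℕ) :
    act a (act b (act a s)) = act a (act b s) := by
  have hba : act b (act a s) = Function.update (act b s) a (sumAbove a s + 1) := by
    rw [act, sumAbove_act_of_not_lt (not_lt.mpr hab.le), act, Function.update_comm hab.ne]
    rfl
  rw [hba, act, act, sumAbove_update_of_not_lt (lt_irrefl a), Function.update_idem]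
  rfl

theorem act_act_act_of_gt {a b : Fin n} (hab : a < b) (s : Fin n → ℕ) :
    act b (act a (act b s)) = act a (act b s) := by
  conv_lhs => rw [act]
  rw [sumAbove_act_of_not_lt (not_lt.mpr hab.le), sumAbove_act_self,
    Function.update_eq_self_iff, act_of_ne hab.ne', act_self]

theorem actWord_eq_of_kisEquiv {x y : List (Fin n)} (h : KisEquiv x y) (s : Fin n → ℕ) :
    actWord x s = actWord y s := by
  induction h with
  | rel x y hxy =>
    cases hxy <;> simp [act_act, act_act_act_of_lt, act_act_act_of_gt, *]
  | refl x => rfl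
  | symm x y _ ih => exact ih.symm
  | trans x y z _ _ ih₁ ih₂ => exact ih₁.trans ih₂

theorem actWord_of_not_mem {a : Fin n} {w : List (Fin n)} (h : a ∉ w) (s : Fin n → ℕ) :
    actWord w s a = s a := by
  induction w with
  | nil => rfl
  | cons b w ih =>
    rw [List.mem_cons, not_or] at h
    rw [actWord_cons, act_of_ne h.1, ih h.2]

def Dominated (s : Fin n → ℕ) : Prop := ∀ a, s a ≤ sumAbove a s + 1

theorem dominated_zero : Dominated (0 : Fin n → ℕ) := fun _ => Nat.zero_le _

theorem Dominated.le_act {s : Fin n → ℕ} (hs : Dominated s) (a : Fin n) : s ≤ act a s := by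
  intro k
  by_cases hk : k = a
  · subst hk
    rw [act_self]
    exact hs k
  · rw [act_of_ne hk]

theorem Dominated.act {s : Fin n → ℕ} (hs : Dominated s) (a : Fin n) : Dominated (act a s) := by
  intro k
  by_cases hk : k = a
  · subst hk
    rw [act_self, sumAbove_act_self]
  · rw [act_of_ne hk]
    exact (hs k).trans (Nat.add_le_add_right (sumAbove_mono (hs.le_act a)) 1)

theorem Dominated.actWord {s : Fin n → ℕ} (hs : Dominated s) (w : List (Fin n)) :
    Dominated (actWord w s) := by
  induction w with
  | nil => exact hs
  | cons a w ih => exact ih.act a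

theorem actWord_le_actWord_append (x y : List (Fin n)) : actWord y 0 ≤ actWord (x ++ y) 0 := by
  induction x with
  | nil => exact le_rfl
  | cons a x ih => exact ih.trans ((dominated_zero.actWord _).le_act a)

theorem actWord_lt_of_upperSpecial {a : Fin n} {w : List (Fin n)} (h : UpperSpecial (a :: w)) :
    actWord w 0 a < sumAbove a (actWord w 0) + 1 := by
  induction hlen : w.length using Nat.strong_induction_on generalizing a w with
  | _ N ih =>
  by_cases ha : a ∈ w
  swap
  · rw [actWord_of_not_mem ha]
    exact Nat.succ_pos _
  obtain ⟨y₁, y₂, rfl, ha₁⟩ := List.eq_append_cons_of_mem ha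
  obtain ⟨g, hg, hag⟩ := h a y₁ ⟨[], y₂, by simp⟩
  obtain ⟨p, q, rfl⟩ := List.append_of_mem hg
  set t := actWord (q ++ a :: y₂) 0
  have hg_lt : t g < sumAbove g t + 1 :=
    ih _ (by simp at hlen ⊢; omega) (h.infix ⟨a :: p, [], by simp⟩) rfl
  calc actWord (p ++ g :: q ++ a :: y₂) 0 a = sumAbove a (actWord y₂ 0) + 1 := by
        rw [actWord_append, actWord_of_not_mem ha₁, actWord_cons, act_self]
    _ = sumAbove a (actWord (a :: y₂) 0) + 1 := by rw [actWord_cons, sumAbove_act_self]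
    _ ≤ sumAbove a t + 1 := by gcongr; exact sumAbove_mono (actWord_le_actWord_append q _)
    _ < sumAbove a (act g t) + 1 := by
        gcongr
        exact sumAbove_lt ((dominated_zero.actWord _).le_act g) hag (by rwa [act_self])
    _ ≤ sumAbove a (actWord (p ++ g :: q ++ a :: y₂) 0) + 1 := by
        gcongr
        rw [List.append_assoc]
        exact sumAbove_mono (actWord_le_actWord_append p (g :: q ++ a :: y₂))

theorem not_kisEquiv_cons_self {a : Fin n} {w : List (Fin n)} (h : UpperSpecial (a :: w)) :
    ¬ KisEquiv (a :: w) w := fun he =>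
  (actWord_lt_of_upperSpecial h).ne' <| by
    simpa using congrFun (actWord_eq_of_kisEquiv he 0) a

end Kiselman

theorem exists_gt_of_kisEquiv_filterGE {A S C : List (Fin n)} {i : Fin n} {m₁ m₂ : List (Fin n)}
    (hAS : Canonical (A ++ S)) (h₁ : [i] ++ m₁ <:+ A) (h₂ : m₂ ++ [i] <+: C)
    (hCS : KisEquiv (filterGE i C) (filterGE i S)) : ∃ j ∈ m₁ ++ m₂, i < j := by
  by_contra! hle
  obtain ⟨L, rfl⟩ := h₁
  obtain ⟨R, rfl⟩ := h₂
  have hi₁ : i ∉ m₁ := by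
    intro hi
    obtain ⟨p, q, rfl, -⟩ := List.eq_append_cons_of_mem hi
    obtain ⟨j, hj, hij⟩ := (hAS i p ⟨L, q ++ S, by simp⟩).1
    exact (hle j (by simp [hj])).not_gt hij
  have hm₁ : filterGE i m₁ = [] := List.filter_eq_nil_iff.mpr fun j hj hij =>
    hi₁ (le_antisymm (hle j (by simp [hj])) (of_decide_eq_true hij) ▸ hj)
  have hU : UpperSpecial (i :: filterGE i S) := by
    have := (hAS.infix ⟨L, [], by simp⟩ : Canonical ([i] ++ m₁ ++ S)).upperSpecial.filterGE i
    simpa [hm₁] using this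
  obtain ⟨t, ht⟩ : ∃ t, filterGE i (m₂ ++ [i] ++ R) = i :: t := by
    cases hF : filterGE i m₂ with
    | nil => exact ⟨filterGE i R, by simp [hF]⟩
    | cons b l =>
      have hb : b ∈ filterGE i m₂ := hF ▸ List.mem_cons_self
      obtain ⟨hbm, hib⟩ := List.mem_filter.mp hb
      have hbi : b = i := le_antisymm (hle b (by simp [hbm])) (of_decide_eq_true hib)
      exact ⟨l ++ i :: filterGE i R, by simp [hF, hbi]⟩
  refine Kiselman.not_kisEquiv_cons_self hU ?_
  rw [ht] at hCS
  have hii : KisEquiv (i :: i :: t) (i :: t) := by simpa using KisEquiv.append_append [] t (.idem i)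
  exact ((hCS.symm.cons i).trans hii).trans hCS

theorem Canonical.append_of_kisEquiv_filter {P S C : List (Fin n)} {x k : Fin n} (hxk : x ≤ k)
    (hPS : Canonical (P ++ [x] ++ S)) (hC : Canonical C)
    (hCS : KisEquiv C (S.filter (k < ·))) : Canonical (P ++ [x] ++ C) := by
  refine (hPS.infix (List.infix_append [] _ S)).append hC fun i m₁ m₂ h₁ h₂ => ?_
  have hki : k < i := by
    have hi : i ∈ S.filter (k < ·) := (hCS.mem_iff_s11 i).mp (h₂.subset (by simp))
    exact of_decide_eq_true (List.mem_filter.mp hi).2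
  have hF : filterGE i (S.filter (k < ·)) = filterGE i S := by
    simp only [filterGE, List.filter_filter]
    exact List.filter_congr fun a _ => by simpa using fun h => hki.trans_le h
  refine ⟨exists_gt_of_kisEquiv_filterGE hPS h₁ h₂ (hF ▸ hCS.filter _), x, ?_, hxk.trans_lt hki⟩
  exact List.mem_append_left _ (List.mem_of_cons_suffix_append_singleton h₁ (hxk.trans_lt hki).ne')

theorem stmt_11_general {n : ℕ} (u u' v v' c d : List (Fin n)) (z o : Fin n)
    (hz : (z : ℕ) = 0) (ho : (o : ℕ) = 1)
    (hu' : ∀ a ∈ u', 2 ≤ (a : ℕ))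
    (hv : ∀ a ∈ v, 2 ≤ (a : ℕ)) (hv' : ∀ a ∈ v', 2 ≤ (a : ℕ))
    (hcan : Canonical (u ++ [o] ++ u' ++ [z] ++ v ++ [o] ++ v'))
    (hc : Canonical c) (hcv : KisEquiv c (v ++ v'))
    (hd : Canonical d) (hdv : KisEquiv d (u' ++ v ++ v')) :
    Canonical (u ++ [o] ++ u' ++ [z] ++ c) ∧ Canonical (u ++ [o] ++ d) := by
  have hzo : z ≤ o := Fin.le_def.mpr (by omega)
  have hfilter (w : List (Fin n)) (hw : ∀ a ∈ w, 2 ≤ (a : ℕ)) : w.filter (o < ·) = w :=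
    List.filter_eq_self.mpr fun a ha => decide_eq_true (Fin.lt_def.mpr (by grind))
  constructor
  · refine Canonical.append_of_kisEquiv_filter (S := v ++ [o] ++ v') hzo (by simpa using hcan) hc ?_
    simpa [hfilter v hv, hfilter v' hv'] using hcv
  · refine Canonical.append_of_kisEquiv_filter (S := u' ++ [z] ++ v ++ [o] ++ v') le_rfl
      (by simpa using hcan) hd ?_
    simpa [hfilter u' hu', hfilter v hv, hfilter v' hv', hzo.not_gt] using hdv

/-- If `u ++ [1] ++ u' ++ [0] ++ v ++ [1] ++ v'` is canonical with `u, u', v, v'` having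
all letters `≥ 2`, then both `u ++ [1] ++ u' ++ [0] ++ Can (v ++ v')` and
`u ++ [1] ++ Can (u' ++ v ++ v')` are canonical. -/
theorem stmt_11 {n : ℕ} (u u' v v' c d : List (Fin n)) (z o : Fin n)
    (hz : (z : ℕ) = 0) (ho : (o : ℕ) = 1)
    (hu : ∀ a ∈ u, 2 ≤ (a : ℕ)) (hu' : ∀ a ∈ u', 2 ≤ (a : ℕ))
    (hv : ∀ a ∈ v, 2 ≤ (a : ℕ)) (hv' : ∀ a ∈ v', 2 ≤ (a : ℕ))
    (hcan : Canonical (u ++ [o] ++ u' ++ [z] ++ v ++ [o] ++ v'))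
    (hc : Canonical c) (hcv : KisEquiv c (v ++ v'))
    (hd : Canonical d) (hdv : KisEquiv d (u' ++ v ++ v')) :
    Canonical (u ++ [o] ++ u' ++ [z] ++ c) ∧ Canonical (u ++ [o] ++ d) :=
  stmt_11_general u u' v v' c d z o hz ho hu' hv hv' hcan hc hcv hd hdv
end
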